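/- arXiv:2501.11832 — 2 statements merged into one kernel-verified Lean document; each statement's English description precedes it below -/
import Mathlib

section
/- Let G be a finite simple graph, let P_1 be a path and C_1 a cycle in G that are vertex-disjoint, and let C_f be a 4-cycle in G on vertices a, b, c, d (with edges ab, bc, cd, da) such that the edge ab belongs to P_1, the edge cd belongs to C_1, and the edges bc and ad belong to neither. Then the subgraph obtained from P_1 ∪ C_1 by removing the edges ab and cd and adding the edges bc and ad is a single path whose vertex set is V(P_1) ∪ V(C_1), and whose endpoints are the endpoints of P_1. -/
/-!
Replacing `ab, cd` by `bc, da` preserves every vertex degree, so the new subgraph has the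
degrees of `P₁ ⊔ C₁`: one at `x` and `y`, two everywhere else. It is connected because an
edge of a cycle is never a bridge: `c` and `d` stay joined in `C₁ - cd`, so `a – d ⋯ c – b`
rejoins the two halves of `P₁ - ab`, and every vertex of `C₁ - cd` still reaches `c` or `d`.
-/

/-- A subgraph is a cycle if it is nonempty, connected and every one of its
vertices has exactly two neighbours within it. -/
def SimpleGraph.Subgraph.IsCycleSubgraph {V : Type*} {G : SimpleGraph V}
    (C : G.Subgraph) : Prop :=
  C.Connected ∧ ∀ v ∈ C.verts, (C.neighborSet v).ncard = 2

/-- A subgraph is a path with endpoints `x` and `y` if it is connected, `x ≠ y`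
are vertices of degree one in it, and every other vertex has degree two. -/
def SimpleGraph.Subgraph.IsPathSubgraph {V : Type*} {G : SimpleGraph V}
    (P : G.Subgraph) (x y : V) : Prop :=
  P.Connected ∧ x ≠ y ∧ x ∈ P.verts ∧ y ∈ P.verts ∧
    (P.neighborSet x).ncard = 1 ∧ (P.neighborSet y).ncard = 1 ∧
    ∀ v ∈ P.verts, v ≠ x → v ≠ y → (P.neighborSet v).ncard = 2

namespace SimpleGraph

variable {V : Type*} {G G' : SimpleGraph V} {u v w : V}

lemma Reachable.deleteEdges_or (h : G.Reachable w u) (v : V) :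
    (G.deleteEdges {s(u, v)}).Reachable w u ∨ (G.deleteEdges {s(u, v)}).Reachable w v := by
  rw [reachable_iff_reflTransGen] at h
  induction h using Relation.ReflTransGen.head_induction_on with
  | refl => exact Or.inl .rfl
  | @head w w' hadj _ ih =>
    by_cases he : s(w, w') = s(u, v)
    · rcases Sym2.eq_iff.1 he with ⟨rfl, -⟩ | ⟨rfl, -⟩
      · exact Or.inl .rfl
      · exact Or.inr .rfl
    · have hadj' : (G.deleteEdges {s(u, v)}).Adj w w' := by simpa [he] using hadj
      exact ih.imp hadj'.reachable.trans hadj'.reachable.trans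

lemma Reachable.mono_of_deleteEdges_le (h : G.Reachable w u)
    (hle : G.deleteEdges {s(u, v)} ≤ G') (huv : G'.Reachable u v) : G'.Reachable w u :=
  (h.deleteEdges_or v).elim (·.mono hle) fun h' => (h'.mono hle).trans huv.symm

namespace Subgraph

variable {H K P C : G.Subgraph}

lemma Connected.reachable_spanningCoe (hH : H.Connected) (hu : u ∈ H.verts)
    (hv : v ∈ H.verts) : H.spanningCoe.Reachable u v :=
  (hH ⟨u, hu⟩ ⟨v, hv⟩).map ⟨Subtype.val, id⟩

lemma connected_of_forall_reachable_spanningCoe (hw : w ∈ H.verts)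
    (h : ∀ v ∈ H.verts, H.spanningCoe.Reachable v w) : H.Connected := by
  have hlift : ∀ {u} (hu : u ∈ H.verts), H.spanningCoe.Reachable u w →
      H.coe.Reachable ⟨u, hu⟩ ⟨w, hw⟩ := by
    intro u hu huw
    rw [reachable_iff_reflTransGen] at huw
    induction huw using Relation.ReflTransGen.head_induction_on with
    | refl => rfl
    | head hadj _ ih =>
      exact (show H.coe.Adj ⟨_, hu⟩ ⟨_, H.edge_vert hadj.symm⟩ from hadj).reachable.trans
        (ih _)
  refine Subgraph.connected_iff.2 ⟨⟨fun u v => ?_⟩, ⟨w, hw⟩⟩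
  exact (hlift u.2 (h u u.2)).trans (hlift v.2 (h v v.2)).symm

lemma neighborSet_sup_of_notMem_right (hv : v ∉ C.verts) :
    (P ⊔ C).neighborSet v = P.neighborSet v := by
  rw [neighborSet_sup, Set.union_eq_left]
  exact fun u hu => absurd (C.edge_vert hu) hv

lemma neighborSet_sup_of_notMem_left (hv : v ∉ P.verts) :
    (P ⊔ C).neighborSet v = C.neighborSet v := by
  rw [sup_comm, neighborSet_sup_of_notMem_right hv]

lemma not_sup_adj_of_disjoint (hdisj : Disjoint P.verts C.verts) (hu : u ∈ P.verts)
    (hv : v ∈ C.verts) : ¬(P ⊔ C).Adj u v := by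
  rintro (h | h)
  · exact Set.disjoint_left.1 hdisj (P.edge_vert h.symm) hv
  · exact Set.disjoint_left.1 hdisj hu (C.edge_vert h)

lemma IsCycleSubgraph.reachable_deleteEdges [Finite V] (hC : C.IsCycleSubgraph)
    (huv : C.Adj u v) : (C.spanningCoe.deleteEdges {s(u, v)}).Reachable u v :=
  IsCycles.reachable_deleteEdges huv fun w ⟨_, hw⟩ => hC.2 w (C.edge_vert hw)

lemma isPathSubgraph_of_ncard_neighborSet_eq_sup {x y : V} (hP : P.IsPathSubgraph x y)
    (hC : C.IsCycleSubgraph) (hdisj : Disjoint P.verts C.verts) (hH : H.Connected)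
    (hverts : H.verts = P.verts ∪ C.verts)
    (hdeg : ∀ v, (H.neighborSet v).ncard = ((P ⊔ C).neighborSet v).ncard) :
    H.IsPathSubgraph x y := by
  obtain ⟨-, hxy, hx, hy, hdx, hdy, hdeg₂⟩ := hP
  have hdegP : ∀ v ∈ P.verts, (H.neighborSet v).ncard = (P.neighborSet v).ncard :=
    fun v hv => by rw [hdeg, neighborSet_sup_of_notMem_right (Set.disjoint_left.1 hdisj hv)]
  refine ⟨hH, hxy, hverts ▸ Or.inl hx, hverts ▸ Or.inl hy, hdegP x hx ▸ hdx,
    hdegP y hy ▸ hdy, ?_⟩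
  intro v hv hvx hvy
  rcases hverts ▸ hv with hv | hv
  · exact hdegP v hv ▸ hdeg₂ v hv hvx hvy
  · rw [hdeg, neighborSet_sup_of_notMem_left (Set.disjoint_right.1 hdisj hv)]
    exact hC.2 v hv

/-- `K.twoSwitch hbc hda` is the paper's `K ⊕ C_f` for the separant 4-cycle `C_f = abcd`. -/
def twoSwitch (K : G.Subgraph) {a b c d : V} (hbc : G.Adj b c) (hda : G.Adj d a) :
    G.Subgraph :=
  K.deleteEdges {s(a, b), s(c, d)} ⊔ G.subgraphOfAdj hbc ⊔ G.subgraphOfAdj hda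

section twoSwitch

variable {a b c d : V} (hbc : G.Adj b c) (hda : G.Adj d a)

lemma twoSwitch_adj : (K.twoSwitch hbc hda).Adj u v ↔
    (K.Adj u v ∧ s(u, v) ≠ s(a, b) ∧ s(u, v) ≠ s(c, d)) ∨ s(u, v) = s(b, c) ∨
      s(u, v) = s(d, a) := by
  simp only [twoSwitch, sup_adj, deleteEdges_adj, subgraphOfAdj_adj, Set.mem_insert_iff,
    Set.mem_singleton_iff, not_or, or_assoc]
  grind

lemma verts_twoSwitch (ha : a ∈ K.verts) (hb : b ∈ K.verts) (hc : c ∈ K.verts)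
    (hd : d ∈ K.verts) : (K.twoSwitch hbc hda).verts = K.verts := by
  simp [twoSwitch, *]

lemma twoSwitch_symm : K.twoSwitch hbc hda = K.twoSwitch hda.symm hbc.symm := by
  ext u v
  · simp only [twoSwitch, verts_sup, deleteEdges_verts, subgraphOfAdj_verts, Set.mem_union,
      Set.mem_insert_iff, Set.mem_singleton_iff]
    tauto
  · rw [twoSwitch_adj, twoSwitch_adj]
    grind [Sym2.eq_swap]

lemma twoSwitch_comm : K.twoSwitch hbc hda = K.twoSwitch hda hbc := by
  ext u v
  · simp only [twoSwitch, verts_sup, deleteEdges_verts, subgraphOfAdj_verts, Set.mem_union,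
      Set.mem_insert_iff, Set.mem_singleton_iff]
    tauto
  · simp only [twoSwitch_adj]
    tauto

lemma neighborSet_twoSwitch_left (hab : a ≠ b) (hac : a ≠ c) :
    (K.twoSwitch hbc hda).neighborSet a = insert d (K.neighborSet a \ {b}) := by
  ext u
  simp only [mem_neighborSet, twoSwitch_adj, Set.mem_insert_iff, Set.mem_sdiff,
    Set.mem_singleton_iff]
  have := hda.ne
  grind

lemma neighborSet_twoSwitch_of_ne (hva : v ≠ a) (hvb : v ≠ b) (hvc : v ≠ c) (hvd : v ≠ d) :
    (K.twoSwitch hbc hda).neighborSet v = K.neighborSet v := by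
  ext u
  simp only [mem_neighborSet, twoSwitch_adj]
  grind

lemma ncard_neighborSet_twoSwitch_left (hab : K.Adj a b) (had : ¬K.Adj a d) (hac : a ≠ c) :
    ((K.twoSwitch hbc hda).neighborSet a).ncard = (K.neighborSet a).ncard := by
  rw [neighborSet_twoSwitch_left hbc hda hab.ne hac]
  exact Set.ncard_exchange had hab

lemma ncard_neighborSet_twoSwitch (hab : K.Adj a b) (hcd : K.Adj c d) (hbc' : ¬K.Adj b c)
    (hda' : ¬K.Adj d a) (hac : a ≠ c) (hbd : b ≠ d) (v : V) :
    ((K.twoSwitch hbc hda).neighborSet v).ncard = (K.neighborSet v).ncard := by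
  by_cases hva : v = a
  · subst hva
    exact ncard_neighborSet_twoSwitch_left hbc hda hab (mt Subgraph.Adj.symm hda') hac
  by_cases hvb : v = b
  · subst hvb
    rw [twoSwitch_symm]
    exact ncard_neighborSet_twoSwitch_left _ _ hab.symm hbc' hbd
  by_cases hvc : v = c
  · subst hvc
    rw [twoSwitch_comm]
    exact ncard_neighborSet_twoSwitch_left _ _ hcd (mt Subgraph.Adj.symm hbc') hac.symm
  by_cases hvd : v = d
  · subst hvd
    rw [twoSwitch_comm, twoSwitch_symm]
    exact ncard_neighborSet_twoSwitch_left _ _ hcd.symm hda' hbd.symm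
  rw [neighborSet_twoSwitch_of_ne hbc hda hva hvb hvc hvd]

lemma connected_twoSwitch_sup (hP : P.Connected) (hC : C.Connected)
    (hdisj : Disjoint P.verts C.verts) (hab : P.Adj a b) (hcd : C.Adj c d)
    (hcd' : (C.spanningCoe.deleteEdges {s(c, d)}).Reachable c d) :
    ((P ⊔ C).twoSwitch hbc hda).Connected := by
  set M := ((P ⊔ C).twoSwitch hbc hda).spanningCoe
  have haP := P.edge_vert hab
  have hcC := C.edge_vert hcd
  have hPM : P.spanningCoe.deleteEdges {s(a, b)} ≤ M := by
    intro u v huv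
    obtain ⟨huv, hne⟩ := SimpleGraph.deleteEdges_adj.1 huv
    refine (twoSwitch_adj hbc hda).2 (Or.inl ⟨Or.inl huv, hne, fun he => ?_⟩)
    have hcd : s(c, d) ∈ P.edgeSet := he ▸ huv
    exact Set.disjoint_left.1 hdisj (P.mem_verts_of_mem_edge hcd (Sym2.mem_mk_left c d)) hcC
  have hCM : C.spanningCoe.deleteEdges {s(c, d)} ≤ M := by
    intro u v huv
    obtain ⟨huv, hne⟩ := SimpleGraph.deleteEdges_adj.1 huv
    refine (twoSwitch_adj hbc hda).2 (Or.inl ⟨Or.inr huv, fun he => ?_, hne⟩)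
    have hab : s(a, b) ∈ C.edgeSet := he ▸ huv
    exact Set.disjoint_left.1 hdisj haP (C.mem_verts_of_mem_edge hab (Sym2.mem_mk_left a b))
  have hbcM : M.Adj b c := (twoSwitch_adj hbc hda).2 (Or.inr (Or.inl rfl))
  have hdaM : M.Adj d a := (twoSwitch_adj hbc hda).2 (Or.inr (Or.inr rfl))
  have hcdM : M.Reachable c d := hcd'.mono hCM
  have habM : M.Reachable a b := hdaM.symm.reachable.trans (hcdM.symm.trans hbcM.symm.reachable)
  have hverts : ((P ⊔ C).twoSwitch hbc hda).verts = P.verts ∪ C.verts :=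
    verts_twoSwitch (K := P ⊔ C) hbc hda (Or.inl haP) (Or.inl (P.edge_vert hab.symm))
      (Or.inr hcC) (Or.inr (C.edge_vert hcd.symm))
  refine connected_of_forall_reachable_spanningCoe (hverts ▸ Set.mem_union_left _ haP)
    fun v hv => ?_
  rcases hverts ▸ hv with hv | hv
  · exact (hP.reachable_spanningCoe hv haP).mono_of_deleteEdges_le hPM habM
  · exact ((hC.reachable_spanningCoe hv hcC).mono_of_deleteEdges_le hCM hcdM).trans
      (hcdM.trans hdaM.reachable)

end twoSwitch

end Subgraph

end SimpleGraph

theorem cycle_path_merging_general {V : Type*} [Fintype V] {G : SimpleGraph V}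
    (P₁ C₁ : G.Subgraph) (x y : V)
    (hP₁ : P₁.IsPathSubgraph x y) (hC₁ : C₁.IsCycleSubgraph)
    (hdisj : Disjoint P₁.verts C₁.verts)
    (a b c d : V)
    (hbc : G.Adj b c) (hda : G.Adj d a)
    (habP₁ : P₁.Adj a b) (hcdC₁ : C₁.Adj c d) :
    (((P₁ ⊔ C₁).deleteEdges {s(a, b), s(c, d)} ⊔ G.subgraphOfAdj hbc ⊔
        G.subgraphOfAdj hda).verts = P₁.verts ∪ C₁.verts) ∧
      ((P₁ ⊔ C₁).deleteEdges {s(a, b), s(c, d)} ⊔ G.subgraphOfAdj hbc ⊔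
        G.subgraphOfAdj hda).IsPathSubgraph x y := by
  open SimpleGraph.Subgraph in
  have haP := P₁.edge_vert habP₁
  have hbP := P₁.edge_vert habP₁.symm
  have hcC := C₁.edge_vert hcdC₁
  have hdC := C₁.edge_vert hcdC₁.symm
  have hverts : ((P₁ ⊔ C₁).twoSwitch hbc hda).verts = P₁.verts ∪ C₁.verts :=
    verts_twoSwitch hbc hda (Or.inl haP) (Or.inl hbP) (Or.inr hcC) (Or.inr hdC)
  have hdeg := ncard_neighborSet_twoSwitch hbc hda (Or.inl habP₁) (Or.inr hcdC₁)
    (not_sup_adj_of_disjoint hdisj hbP hcC) (mt Adj.symm (not_sup_adj_of_disjoint hdisj haP hdC))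
    (hdisj.ne_of_mem haP hcC) (hdisj.ne_of_mem hbP hdC)
  have hconn := connected_twoSwitch_sup hbc hda hP₁.1 hC₁.1 hdisj habP₁ hcdC₁
    (hC₁.reachable_deleteEdges hcdC₁)
  exact ⟨hverts, isPathSubgraph_of_ncard_neighborSet_eq_sup hP₁ hC₁ hdisj hconn hverts hdeg⟩

/-- **Cycle-path-merging operation.**  Let `P₁` be a path with endpoints
`x, y` and `C₁` a cycle in a finite simple graph `G`, vertex-disjoint from
`P₁`, and let `a, b, c, d` be the vertices of a 4-cycle `C_f` of `G` (with
edges `ab, bc, cd, da`) such that `ab` belongs to `P₁`, `cd` belongs to `C₁`,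
and the edges `bc` and `ad` belong to neither.  Then the subgraph obtained from
`P₁ ∪ C₁` by removing the edges `ab`, `cd` and adding the edges `bc`, `ad` is a
single path on vertex set `V(P₁) ∪ V(C₁)` whose endpoints are `x` and `y`. -/
theorem cycle_path_merging {V : Type*} [Fintype V] {G : SimpleGraph V}
    (P₁ C₁ : G.Subgraph) (x y : V)
    (hP₁ : P₁.IsPathSubgraph x y) (hC₁ : C₁.IsCycleSubgraph)
    (hdisj : Disjoint P₁.verts C₁.verts)
    (a b c d : V)
    (hab : G.Adj a b) (hbc : G.Adj b c) (hcd : G.Adj c d) (hda : G.Adj d a)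
    (hac : a ≠ c) (hbd : b ≠ d)
    (habP₁ : P₁.Adj a b) (hcdC₁ : C₁.Adj c d)
    (hbcP : ¬ P₁.Adj b c) (hbcC : ¬ C₁.Adj b c)
    (hadP : ¬ P₁.Adj a d) (hadC : ¬ C₁.Adj a d) :
    (((P₁ ⊔ C₁).deleteEdges {s(a, b), s(c, d)} ⊔ G.subgraphOfAdj hbc ⊔
        G.subgraphOfAdj hda).verts = P₁.verts ∪ C₁.verts) ∧
      ((P₁ ⊔ C₁).deleteEdges {s(a, b), s(c, d)} ⊔ G.subgraphOfAdj hbc ⊔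
        G.subgraphOfAdj hda).IsPathSubgraph x y :=
  cycle_path_merging_general P₁ C₁ x y hP₁ hC₁ hdisj a b c d hbc hda habP₁ hcdC₁
end

section
/- Let G be a finite simple graph and let M be a 2-limited spanning subgraph of G, i.e. V(M) = V(G) and 1 ≤ deg_M(v) ≤ 2 for every vertex v. Let P = (v_0, v_1, …, v_k) be an M-augmenting path: a path in G whose edges alternately lie outside M and inside M, whose first edge v_0v_1 and last edge v_{k−1}v_k lie outside M, and whose endpoints v_0 and v_k satisfy deg_M(v_0) = deg_M(v_k) = 1. Then M_1 = M ⊕ P (the subgraph whose edge set is the symmetric difference of the edge sets of M and P) is again a 2-limited spanning subgraph of G, and the number of vertices of degree 1 in M_1 equals the number of vertices of degree 1 in M minus 2. -/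
open SimpleGraph

variable {V : Type*}

/-- `M` is a 2-limited spanning subgraph of `G`: it contains every vertex and
every vertex has degree 1 or 2 in `M`. -/
def IsTwoLimited {G : SimpleGraph V} (M : G.Subgraph) : Prop :=
  M.IsSpanning ∧ ∀ v : V, 1 ≤ (M.neighborSet v).ncard ∧ (M.neighborSet v).ncard ≤ 2

/-- An `M`-augmenting path: a path in `G` whose edges alternately lie outside
`M` (the even-indexed ones, in particular the first and the last — so the
length is odd) and inside `M`, and whose two endpoints are unfilled, i.e. have
degree 1 in `M`. -/
def IsAugmentingPath {G : SimpleGraph V} (M : G.Subgraph) {u v : V}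
    (p : G.Walk u v) : Prop :=
  p.IsPath ∧ Odd p.length ∧
    (M.neighborSet u).ncard = 1 ∧ (M.neighborSet v).ncard = 1 ∧
    ∀ (i : ℕ) (h : i < p.edges.length),
      (p.edges.get ⟨i, h⟩ ∈ M.edgeSet ↔ i % 2 = 1)

/-- The spanning subgraph `M ⊕ P` whose edge set is the symmetric difference of
the edge sets of `M` and of the path `P`. -/
def symmDiffSubgraph {G : SimpleGraph V} (M : G.Subgraph) {u v : V}
    (p : G.Walk u v) : G.Subgraph where
  verts := Set.univ
  Adj x y := (M.Adj x y ∧ s(x, y) ∉ p.edges) ∨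
    (G.Adj x y ∧ s(x, y) ∈ p.edges ∧ ¬ M.Adj x y)
  adj_sub := by
    rintro x y (⟨h, -⟩ | ⟨h, -, -⟩)
    · exact M.adj_sub h
    · exact h
  edge_vert := by
    intro x y _
    trivial
  symm := by
    constructor
    rintro x y (⟨h1, h2⟩ | ⟨h1, h2, h3⟩)
    · exact Or.inl ⟨h1.symm, by rwa [Sym2.eq_swap]⟩
    · exact Or.inr ⟨h1.symm, by rwa [Sym2.eq_swap], fun h => h3 h.symm⟩

/-!
Flipping the edges of `P` replaces the `M`-neighbourhood of a vertex by its symmetric difference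
with the `P`-neighbourhood, and `|A ∆ B| = |A| + |B| - 2 |A ∩ B|`. An endpoint of `P` has one path
neighbour, joined by a blue edge, so its degree goes from 1 to 2. An inner vertex of `P` has two
path neighbours, joined by one red and one blue edge, so its degree is unchanged, as is that of a
vertex off `P`. Hence all degrees stay in `{1, 2}` and exactly the two endpoints stop being
unfilled.
-/

open scoped symmDiff

namespace Set

variable {α : Type*} {s t : Set α} {a b : α}

theorem ncard_symmDiff_add_two_mul_ncard_inter (hs : s.Finite) (ht : t.Finite) :
    (s ∆ t).ncard + 2 * (s ∩ t).ncard = s.ncard + t.ncard := by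
  have hdiff : (s ∆ t).ncard + (s ∩ t).ncard = (s ∪ t).ncard := by
    rw [symmDiff_eq_sup_sdiff_inf]
    exact ncard_sdiff_add_ncard_of_subset inf_le_sup (hs.union ht)
  have := ncard_union_add_ncard_inter s t hs ht
  omega

theorem ncard_symmDiff_singleton (hs : s.Finite) (ha : a ∉ s) :
    (s ∆ {a}).ncard = s.ncard + 1 := by
  have := ncard_symmDiff_add_two_mul_ncard_inter hs (finite_singleton a)
  rw [inter_singleton_eq_empty.mpr ha, ncard_empty, ncard_singleton] at this
  omega

theorem ncard_symmDiff_pair (hs : s.Finite) (ha : a ∈ s) (hb : b ∉ s) :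
    (s ∆ {a, b}).ncard = s.ncard := by
  have hinter : s ∩ {a, b} = {a} := by
    ext x
    simp only [mem_inter_iff, mem_insert_iff, mem_singleton_iff]
    constructor
    · rintro ⟨hx, rfl | rfl⟩
      exacts [rfl, absurd hx hb]
    · rintro rfl
      exact ⟨ha, Or.inl rfl⟩
  have := ncard_symmDiff_add_two_mul_ncard_inter hs (toFinite {a, b})
  rw [hinter, ncard_singleton, ncard_pair (ne_of_mem_of_not_mem ha hb)] at this
  omega

end Set

section SymmDiffSubgraph

variable {G : SimpleGraph V} {M : G.Subgraph} {u v : V} {p : G.Walk u v}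

theorem neighborSet_symmDiffSubgraph (x : V) :
    (symmDiffSubgraph M p).neighborSet x = M.neighborSet x ∆ p.toSubgraph.neighborSet x := by
  ext y
  have hG : s(x, y) ∈ p.edges → G.Adj x y := p.adj_of_mem_edges
  simp only [Subgraph.mem_neighborSet, Set.mem_symmDiff, Walk.adj_toSubgraph_iff_mem_edges]
  change (M.Adj x y ∧ _ ∨ G.Adj x y ∧ _ ∧ _) ↔ _
  tauto

namespace IsAugmentingPath

theorem adj_getVert_iff (hp : IsAugmentingPath M p) {i : ℕ} (hi : i < p.length) :
    M.Adj (p.getVert i) (p.getVert (i + 1)) ↔ i % 2 = 1 := by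
  have hi' : i < p.edges.length := by rwa [Walk.length_edges]
  have := hp.2.2.2.2 i hi'
  rwa [List.get_eq_getElem, Walk.getElem_edges, Subgraph.mem_edgeSet] at this

theorem not_nil (hp : IsAugmentingPath M p) : ¬ p.Nil :=
  Walk.not_nil_iff_lt_length.mpr hp.2.1.pos

theorem ne (hp : IsAugmentingPath M p) : u ≠ v := by
  rintro rfl
  exact hp.not_nil (Walk.isPath_iff_nil.mp hp.1)

variable [Finite V]

theorem ncard_neighborSet_symmDiffSubgraph_start (hp : IsAugmentingPath M p) :
    ((symmDiffSubgraph M p).neighborSet u).ncard = 2 := by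
  have ⟨hpath, hodd, hu, _⟩ := hp
  have hblue : p.snd ∉ M.neighborSet u := by
    simpa [Walk.snd] using (hp.adj_getVert_iff hodd.pos).not.mpr (by omega)
  rw [neighborSet_symmDiffSubgraph, hpath.neighborSet_toSubgraph_startpoint hp.not_nil,
    Set.ncard_symmDiff_singleton (Set.toFinite _) hblue, hu]

theorem ncard_neighborSet_symmDiffSubgraph_end (hp : IsAugmentingPath M p) :
    ((symmDiffSubgraph M p).neighborSet v).ncard = 2 := by
  have ⟨hpath, hodd, _, hv, _⟩ := hp
  have hlen := Nat.odd_iff.mp hodd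
  have hblue : p.penultimate ∉ M.neighborSet v := by
    intro hred
    have := (hp.adj_getVert_iff (i := p.length - 1) (by omega)).mp <| by
      rw [Nat.sub_add_cancel hodd.pos, Walk.getVert_length]
      exact hred.symm
    omega
  rw [neighborSet_symmDiffSubgraph, hpath.neighborSet_toSubgraph_endpoint hp.not_nil,
    Set.ncard_symmDiff_singleton (Set.toFinite _) hblue, hv]

theorem ncard_neighborSet_symmDiffSubgraph_of_ne (hp : IsAugmentingPath M p) {x : V}
    (hxu : x ≠ u) (hxv : x ≠ v) :
    ((symmDiffSubgraph M p).neighborSet x).ncard = (M.neighborSet x).ncard := by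
  rw [neighborSet_symmDiffSubgraph]
  by_cases hx : x ∈ p.support
  swap
  · have hempty : p.toSubgraph.neighborSet x = ∅ :=
      Set.eq_empty_of_forall_notMem fun y hy => hx (Walk.mem_support_of_adj_toSubgraph hy)
    rw [hempty, ← Set.bot_eq_empty, symmDiff_bot]
  obtain ⟨i, rfl, hi⟩ := Walk.mem_support_iff_exists_getVert.mp hx
  have hi0 : i ≠ 0 := by rintro rfl; exact hxu p.getVert_zero
  have hilen : i < p.length := lt_of_le_of_ne hi fun h => hxv (h ▸ p.getVert_length)
  have hnext := hp.adj_getVert_iff hilen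
  have hprev : M.Adj (p.getVert i) (p.getVert (i - 1)) ↔ (i - 1) % 2 = 1 := by
    rw [M.adj_comm, ← hp.adj_getVert_iff (by omega), Nat.sub_add_cancel (by omega)]
  rw [hp.1.neighborSet_toSubgraph_internal hi0 hilen]
  rcases Nat.mod_two_eq_zero_or_one i with heven | hodd
  · exact Set.ncard_symmDiff_pair (Set.toFinite _) (hprev.mpr (by omega))
      (hnext.not.mpr (by omega))
  · rw [Set.pair_comm]
    exact Set.ncard_symmDiff_pair (Set.toFinite _) (hnext.mpr hodd) (hprev.not.mpr (by omega))

open Classical in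
theorem ncard_neighborSet_symmDiffSubgraph (hp : IsAugmentingPath M p) (x : V) :
    ((symmDiffSubgraph M p).neighborSet x).ncard =
      if x = u ∨ x = v then 2 else (M.neighborSet x).ncard := by
  split_ifs with hx
  · rcases hx with rfl | rfl
    exacts [hp.ncard_neighborSet_symmDiffSubgraph_start, hp.ncard_neighborSet_symmDiffSubgraph_end]
  · exact hp.ncard_neighborSet_symmDiffSubgraph_of_ne (not_or.mp hx).1 (not_or.mp hx).2

end IsAugmentingPath

end SymmDiffSubgraph

/-- Let `M` be a 2-limited spanning subgraph of a finite simple graph `G` and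
let `P` be an `M`-augmenting path.  Then `M ⊕ P` is again a 2-limited spanning
subgraph of `G`, and the number of its vertices of degree 1 equals the number
of vertices of degree 1 in `M` minus 2. -/
theorem symmDiff_augmenting_path {G : SimpleGraph V} [Fintype V]
    (M : G.Subgraph) (hM : IsTwoLimited M) {u v : V} (p : G.Walk u v)
    (hp : IsAugmentingPath M p) :
    IsTwoLimited (symmDiffSubgraph M p) ∧
      {x : V | ((symmDiffSubgraph M p).neighborSet x).ncard = 1}.ncard + 2 =
        {x : V | (M.neighborSet x).ncard = 1}.ncard := by
  have hdeg := hp.ncard_neighborSet_symmDiffSubgraph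
  have hunfilled : {x : V | ((symmDiffSubgraph M p).neighborSet x).ncard = 1} =
      {x : V | (M.neighborSet x).ncard = 1} \ {u, v} := by
    ext x
    simp only [Set.mem_ofPred_eq, Set.mem_sdiff, Set.mem_insert_iff, Set.mem_singleton_iff, hdeg]
    split_ifs <;> tauto
  have hends : {u, v} ⊆ {x : V | (M.neighborSet x).ncard = 1} :=
    Set.pair_subset hp.2.2.1 hp.2.2.2.1
  refine ⟨⟨fun _ => trivial, fun x => ?_⟩, ?_⟩
  · rw [hdeg]
    split_ifs
    · omega
    · exact hM.2 x
  · rw [hunfilled, ← Set.ncard_pair hp.ne]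
    exact Set.ncard_sdiff_add_ncard_of_subset hends
end
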